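/- Σ_{μ ∈ M_n} H[μ;q] = Σ_{σ ∈ I_n} q^{ℓ̂(σ)}, where M_n is the set of Motzkin paths of length n, H[μ;q] = ∏_{i=1}^n H_i[μ;q] with H_i[μ;q] = [h_i(μ)]_q if step i is a down step and q^{h_i(μ)} otherwise, I_n is the set of involutions in S_n, and ℓ̂(σ) = (ℓ(σ)+c(σ))/2. -/

import Mathlib

open Finset

/-- Steps of a Motzkin path: up, level, down. -/
inductive Step | U | L | D
deriving DecidableEq

instance : Fintype Step :=
  ⟨{Step.U, Step.L, Step.D}, by intro x; cases x <;> simp⟩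

/-- `μ` is a Motzkin path: every prefix has at least as many `U`'s as `D`'s, and the
total numbers of `U`'s and `D`'s agree. -/
def IsMotzkin {n : ℕ} (μ : Fin n → Step) : Prop :=
  (∀ k : Fin n, (Finset.univ.filter (fun j => j ≤ k ∧ μ j = Step.D)).card
      ≤ (Finset.univ.filter (fun j => j ≤ k ∧ μ j = Step.U)).card)
  ∧ (Finset.univ.filter (fun j => μ j = Step.U)).card
    = (Finset.univ.filter (fun j => μ j = Step.D)).card

/-- The height of the `i`-th step of `μ`: the larger of the two `y`-coordinates of
the step, i.e. `#{j ≤ i : μ j = U} − #{j < i : μ j = D}`. -/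
def height {n : ℕ} (μ : Fin n → Step) (i : Fin n) : ℕ :=
  (Finset.univ.filter (fun j => j ≤ i ∧ μ j = Step.U)).card
    - (Finset.univ.filter (fun j => j < i ∧ μ j = Step.D)).card

/-- Biane's word of an involution: `U` if `i < σ i`, `L` if `i = σ i`, `D` if `i > σ i`. -/
def bpath {n : ℕ} (σ : Equiv.Perm (Fin n)) (i : Fin n) : Step :=
  if i < σ i then Step.U else if σ i = i then Step.L else Step.D

/-- Biane's label of step `i`: `|{j ≥ i : σ j ≤ σ i}|`. -/
def blabel {n : ℕ} (σ : Equiv.Perm (Fin n)) (i : Fin n) : ℕ :=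
  (Finset.univ.filter (fun j => i ≤ j ∧ σ j ≤ σ i)).card

open scoped Classical
open Polynomial

/-- The `q`-integer `[m]_q = 1 + q + ⋯ + q^{m-1}`. -/
noncomputable def qint (m : ℕ) : Polynomial ℤ := ∑ i ∈ Finset.range m, X ^ i

/-- `H[μ;q] = ∏_i H_i[μ;q]`, where `H_i = [h_i(μ)]_q` on down steps and
`H_i = q^{h_i(μ)}` otherwise. -/
noncomputable def Hq {n : ℕ} (μ : Fin n → Step) : Polynomial ℤ :=
  ∏ i : Fin n, if μ i = Step.D then qint (height μ i) else X ^ height μ i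

/-- Number of inversions of `σ`. -/
def ell {n : ℕ} (σ : Equiv.Perm (Fin n)) : ℕ :=
  (Finset.univ.filter (fun p : Fin n × Fin n => p.1 < p.2 ∧ σ p.2 < σ p.1)).card

/-- Number of 2-cycles of `σ`. -/
def cyc {n : ℕ} (σ : Equiv.Perm (Fin n)) : ℕ :=
  (Finset.univ.filter (fun i : Fin n => i < σ i)).card

/-!
Both sides are the value at height `0` of a transfer-matrix recursion in the length `n` and the
height `h`:
`F (n+1) h = q^h F n h + q^h F n (h-1) + [h+1]_q F n (h+1)`.
For Motzkin prefixes this is "append a last step" (`L`, `U` or `D`). On the involution side one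
generalizes to involutions of `Fin n` together with a set of *marked* fixed points, read as arcs
whose right end lies beyond `n`. Removing the last point `n` either deletes an unmarked fixed point
(`L`), a marked one (`U`), or an arc `(j, n)`, which is undone by marking `j` (`D`); the factor
`[h+1]_q` records the rank of `j` among the `h + 1` marked points. The weight is a sum of local
statistics making these three moves multiply by the right factors, and for unmarked involutions it
equals `(ℓ + c)/2`: deleting an arc `(j, n)` lowers `ℓ` by `2 #{i | j < i < n, σ i > j} + 1`
and `c` by `1`.
-/

lemma Fin.card_filter_univ_castSucc {n : ℕ} (p : Fin (n + 1) → Prop) [DecidablePred p] :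
    #{i | p i} = #{i : Fin n | p i.castSucc} + if p (Fin.last n) then 1 else 0 := by
  rw [Finset.card_filter, Finset.card_filter, Fin.sum_univ_castSucc]

lemma Fin.sum_finset_succ {M : Type*} [AddCommMonoid M] {n : ℕ} (f : Finset (Fin (n + 1)) → M) :
    ∑ O, f O = ∑ O : Finset (Fin n), f (O.image Fin.castSucc)
      + ∑ O : Finset (Fin n), f (insert (Fin.last n) (O.image Fin.castSucc)) := by
  have hinj : Set.InjOn (image Fin.castSucc) ↑((univ : Finset (Fin n)).powerset) :=
    (Finset.image_injective (Fin.castSucc_injective n)).injOn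
  rw [← powerset_univ, Fin.univ_castSuccEmb, cons_eq_insert,
    sum_powerset_insert (by simp [Fin.castSucc_lt_last, Fin.ne_of_lt]), map_eq_image,
    Fin.coe_castSuccEmb, powerset_image, sum_image hinj, sum_image hinj, powerset_univ]

lemma Finset.sum_filter_notMem_insert {α M : Type*} [Fintype α] [DecidableEq α]
    [AddCommMonoid M] (a : α) (f : Finset α → M) :
    ∑ s with a ∉ s, f (insert a s) = ∑ s with a ∈ s, f s := by
  refine sum_nbij' (insert a) (·.erase a) ?_ ?_ ?_ ?_ fun _ _ => rfl
  · simp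
  · simp
  · intro s hs; simp_all
  · intro s hs; simp_all

lemma Finset.card_filter_and_eq_or {α : Type*} [Fintype α] [DecidableEq α]
    (R P : α → Prop) [DecidablePred R] [DecidablePred P] {j : α} (hj : ¬ P j) :
    #{k | R k ∧ (k = j ∨ P k)} = #{k | R k ∧ P k} + if R j then 1 else 0 := by
  split_ifs with hR
  · rw [← card_insert_of_notMem (s := {k | R k ∧ P k}) (a := j) (by simp [hj])]
    congr 1
    ext k
    by_cases hk : k = j <;> simp [hk, hR]
  · congr 1
    ext k
    by_cases hk : k = j <;> simp [hk, hR]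

lemma sum_X_pow_card_filter_lt {α : Type*} [LinearOrder α] (S : Finset α) :
    ∑ j ∈ S, (X : ℤ[X]) ^ #{k ∈ S | k < j} = qint #S := by
  induction S using Finset.induction_on_max with
  | empty => simp [qint]
  | insert a S hlt ih =>
    have hS : a ∉ S := fun h => lt_irrefl a (hlt a h)
    have hrank (j : α) (hj : j ∈ S) : #{k ∈ insert a S | k < j} = #{k ∈ S | k < j} := by
      rw [filter_insert, if_neg (hlt j hj).not_gt]
    have htop : #{k ∈ insert a S | k < a} = #S := by
      rw [filter_insert, if_neg (lt_irrefl a), filter_true_of_mem hlt]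
    rw [sum_insert hS, card_insert_of_notMem hS, htop,
      sum_congr rfl fun j hj => by rw [hrank j hj], ih, qint, qint, sum_range_succ, add_comm]

lemma Step.sum_univ {M : Type*} [AddCommMonoid M] (f : Step → M) :
    ∑ s, f s = f .U + f .L + f .D := by
  rw [show (univ : Finset Step) = {.U, .L, .D} from rfl, sum_insert (by decide),
    sum_insert (by decide), sum_singleton, add_assoc]

lemma Equiv.Perm.mul_self_eq_one_iff_involutive {α : Type*} (σ : Equiv.Perm α) :
    σ * σ = 1 ↔ Function.Involutive σ := by
  simp [Equiv.ext_iff, Function.Involutive]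

section MotzkinPrefix

variable {n : ℕ}

def prefixCount (μ : Fin n → Step) (s : Step) (k : Fin n) : ℕ := #{j | j ≤ k ∧ μ j = s}

def stepCount (μ : Fin n → Step) (s : Step) : ℕ := #{j | μ j = s}

def IsMotzkinPrefix (μ : Fin n → Step) (h : ℕ) : Prop :=
  (∀ k, prefixCount μ .D k ≤ prefixCount μ .U k) ∧ stepCount μ .U = stepCount μ .D + h

lemma isMotzkin_iff_isMotzkinPrefix_zero (μ : Fin n → Step) :
    IsMotzkin μ ↔ IsMotzkinPrefix μ 0 := Iff.rfl

lemma prefixCount_snoc_castSucc (μ : Fin n → Step) (t s : Step) (k : Fin n) :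
    prefixCount (Fin.snoc μ t) s k.castSucc = prefixCount μ s k := by
  simp [prefixCount, Fin.card_filter_univ_castSucc, (Fin.castSucc_lt_last k).not_ge]

lemma prefixCount_snoc_last (μ : Fin n → Step) (t s : Step) :
    prefixCount (Fin.snoc μ t) s (Fin.last n) = stepCount μ s + if t = s then 1 else 0 := by
  simp [prefixCount, stepCount, Fin.card_filter_univ_castSucc, Fin.le_last]

lemma stepCount_snoc (μ : Fin n → Step) (t s : Step) :
    stepCount (Fin.snoc μ t) s = stepCount μ s + if t = s then 1 else 0 := by
  simp [stepCount, Fin.card_filter_univ_castSucc]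

lemma stepCount_D_le_U {μ : Fin n → Step}
    (hμ : ∀ k, prefixCount μ .D k ≤ prefixCount μ .U k) :
    stepCount μ .D ≤ stepCount μ .U := by
  cases n with
  | zero => simp [stepCount]
  | succ m => simpa [prefixCount, stepCount, Fin.le_last] using hμ (Fin.last m)

lemma isMotzkinPrefix_snoc_iff (μ : Fin n → Step) (t : Step) (h : ℕ) :
    IsMotzkinPrefix (Fin.snoc μ t) h ↔ (∀ k, prefixCount μ .D k ≤ prefixCount μ .U k) ∧
      stepCount μ .U + (if t = .U then 1 else 0)
        = stepCount μ .D + (if t = .D then 1 else 0) + h := by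
  simp only [IsMotzkinPrefix, Fin.forall_fin_succ', prefixCount_snoc_castSucc,
    prefixCount_snoc_last, stepCount_snoc]
  exact ⟨fun ⟨⟨hpre, _⟩, heq⟩ => ⟨hpre, heq⟩,
    fun ⟨hpre, heq⟩ => ⟨⟨hpre, by omega⟩, heq⟩⟩

lemma isMotzkinPrefix_snoc_L {μ : Fin n → Step} {h : ℕ} :
    IsMotzkinPrefix (Fin.snoc μ .L) h ↔ IsMotzkinPrefix μ h := by
  rw [isMotzkinPrefix_snoc_iff, IsMotzkinPrefix]
  simp

lemma isMotzkinPrefix_snoc_U {μ : Fin n → Step} {h : ℕ} :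
    IsMotzkinPrefix (Fin.snoc μ .U) h ↔ 0 < h ∧ IsMotzkinPrefix μ (h - 1) := by
  rw [isMotzkinPrefix_snoc_iff, IsMotzkinPrefix]
  simp only [if_true, reduceCtorEq, if_false]
  constructor
  · rintro ⟨hpre, heq⟩
    have := stepCount_D_le_U hpre
    exact ⟨by omega, hpre, by omega⟩
  · rintro ⟨hh, hpre, heq⟩
    exact ⟨hpre, by omega⟩

lemma isMotzkinPrefix_snoc_D {μ : Fin n → Step} {h : ℕ} :
    IsMotzkinPrefix (Fin.snoc μ .D) h ↔ IsMotzkinPrefix μ (h + 1) := by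
  rw [isMotzkinPrefix_snoc_iff, IsMotzkinPrefix]
  simp only [if_true, reduceCtorEq, if_false, add_zero, add_assoc, add_comm 1 h]

lemma height_snoc_castSucc (μ : Fin n → Step) (t : Step) (i : Fin n) :
    height (Fin.snoc μ t) i.castSucc = height μ i := by
  simp [height, Fin.card_filter_univ_castSucc, (Fin.castSucc_lt_last i).not_ge,
    (Fin.castSucc_lt_last i).not_gt]

lemma height_snoc_last (μ : Fin n → Step) (t : Step) :
    height (Fin.snoc μ t) (Fin.last n)
      = stepCount μ .U + (if t = .U then 1 else 0) - stepCount μ .D := by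
  simp [height, stepCount, Fin.card_filter_univ_castSucc, Fin.le_last, Fin.castSucc_lt_last]

lemma Hq_snoc (μ : Fin n → Step) (t : Step) :
    Hq (Fin.snoc μ t) = Hq μ * if t = .D then qint (height (Fin.snoc μ t) (Fin.last n))
      else X ^ height (Fin.snoc μ t) (Fin.last n) := by
  simp only [Hq, Fin.prod_univ_castSucc, Fin.snoc_castSucc, Fin.snoc_last, height_snoc_castSucc]

lemma Hq_snoc_of_isMotzkinPrefix {μ : Fin n → Step} {h : ℕ} (hμ : IsMotzkinPrefix μ h)
    (t : Step) :
    Hq (Fin.snoc μ t) = Hq μ * if t = .D then qint h else X ^ (h + if t = .U then 1 else 0) := by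
  rw [Hq_snoc, height_snoc_last, hμ.2]
  rcases t <;> simp [add_assoc]

noncomputable def motzkinPrefixSum (n h : ℕ) : ℤ[X] :=
  ∑ μ : Fin n → Step with IsMotzkinPrefix μ h, Hq μ

lemma motzkinPrefixSum_zero_left (h : ℕ) : motzkinPrefixSum 0 h = if h = 0 then 1 else 0 := by
  have hμ (μ : Fin 0 → Step) : IsMotzkinPrefix μ h ↔ h = 0 := by
    simp [IsMotzkinPrefix, stepCount, eq_comm]
  rw [motzkinPrefixSum, sum_filter, Fintype.sum_unique]
  simp [hμ, Hq]

lemma sum_snoc_eq_mul_motzkinPrefixSum (t : Step) {h h' : ℕ} (c : ℤ[X])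
    (hiff : ∀ μ : Fin n → Step, IsMotzkinPrefix (Fin.snoc μ t) h ↔ IsMotzkinPrefix μ h')
    (hc : ∀ μ : Fin n → Step, IsMotzkinPrefix μ h' → Hq (Fin.snoc μ t) = Hq μ * c) :
    ∑ μ : Fin n → Step, (if IsMotzkinPrefix (Fin.snoc μ t) h then Hq (Fin.snoc μ t) else 0)
      = c * motzkinPrefixSum n h' := by
  rw [motzkinPrefixSum, sum_filter, mul_sum]
  refine sum_congr rfl fun μ _ => ?_
  simp only [hiff]
  split_ifs with hμ
  · rw [hc μ hμ, mul_comm]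
  · rw [mul_zero]

lemma motzkinPrefixSum_succ (n h : ℕ) :
    motzkinPrefixSum (n + 1) h = X ^ h * motzkinPrefixSum n h
      + (if h = 0 then 0 else X ^ h * motzkinPrefixSum n (h - 1))
      + qint (h + 1) * motzkinPrefixSum n (h + 1) := by
  have hsplit : motzkinPrefixSum (n + 1) h = ∑ t, ∑ μ : Fin n → Step,
      if IsMotzkinPrefix (Fin.snoc μ t) h then Hq (Fin.snoc μ t) else 0 := by
    rw [motzkinPrefixSum, sum_filter, ← (Fin.snocEquiv fun _ => Step).sum_comp,
      Fintype.sum_prod_type]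
    rfl
  have hU : ∑ μ : Fin n → Step,
        (if IsMotzkinPrefix (Fin.snoc μ .U) h then Hq (Fin.snoc μ .U) else 0)
      = if h = 0 then 0 else X ^ h * motzkinPrefixSum n (h - 1) := by
    split_ifs with h0
    · simp [isMotzkinPrefix_snoc_U, h0]
    · refine sum_snoc_eq_mul_motzkinPrefixSum _ _ (fun μ => ?_) fun μ hμ => ?_
      · simp [isMotzkinPrefix_snoc_U, Nat.pos_of_ne_zero h0]
      · simp [Hq_snoc_of_isMotzkinPrefix hμ, Nat.sub_add_cancel (Nat.pos_of_ne_zero h0)]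
  have hL := sum_snoc_eq_mul_motzkinPrefixSum (n := n) .L (h := h) (X ^ h)
    (fun _ => isMotzkinPrefix_snoc_L) (fun μ hμ => by simp [Hq_snoc_of_isMotzkinPrefix hμ])
  have hD := sum_snoc_eq_mul_motzkinPrefixSum (n := n) .D (h := h) (qint (h + 1))
    (fun _ => isMotzkinPrefix_snoc_D) (fun μ hμ => by simp [Hq_snoc_of_isMotzkinPrefix hμ])
  rw [hsplit, Step.sum_univ, hU, hL, hD]
  ring

end MotzkinPrefix

namespace Equiv.Perm

variable {n : ℕ}

def decomposeLast : Perm (Fin (n + 1)) ≃ Fin (n + 1) × Perm (Fin n) :=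
  ((permCongr finSuccEquivLast).trans decomposeOption).trans
    (prodCongr finSuccEquivLast.symm (Equiv.refl _))

@[simp] lemma decomposeLast_symm_apply_last (p : Fin (n + 1)) (τ : Perm (Fin n)) :
    decomposeLast.symm (p, τ) (Fin.last n) = p := by
  simp [decomposeLast, permCongr_apply]

@[simp] lemma decomposeLast_symm_apply_castSucc (p : Fin (n + 1)) (τ : Perm (Fin n))
    (i : Fin n) :
    decomposeLast.symm (p, τ) i.castSucc = swap p (Fin.last n) (τ i).castSucc := by
  have h := congrArg (· ((τ i).castSucc))
    (trans_swap_trans_symm (finSuccEquivLast p) (finSuccEquivLast (Fin.last n)) finSuccEquivLast)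
  simp only [trans_apply, symm_apply_apply, finSuccEquivLast_last, finSuccEquivLast_castSucc,
    finSuccEquivLast_symm_none] at h
  simpa [decomposeLast, permCongr_apply, swap_comm] using h

lemma decomposeLast_symm_apply_castSucc_of_fixed {p : Fin (n + 1)} {τ : Perm (Fin n)}
    (hp : ∀ j, p = j.castSucc → τ j = j) (k : Fin n) :
    decomposeLast.symm (p, τ) k.castSucc
      = if k.castSucc = p then Fin.last n else (τ k).castSucc := by
  rw [decomposeLast_symm_apply_castSucc]
  split_ifs with hk
  · rw [hp k hk.symm, hk, swap_apply_left]
  · refine swap_apply_of_ne_of_ne (fun h => hk ?_) (Fin.castSucc_lt_last _).ne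
    rwa [τ.injective (hp _ h.symm)] at h

lemma decomposeLast_symm_last_apply_castSucc (τ : Perm (Fin n)) (k : Fin n) :
    decomposeLast.symm (Fin.last n, τ) k.castSucc = (τ k).castSucc := by
  simp

lemma mul_self_decomposeLast_symm_last_iff (τ : Perm (Fin n)) :
    decomposeLast.symm (Fin.last n, τ) * decomposeLast.symm (Fin.last n, τ) = 1 ↔
      τ * τ = 1 := by
  simp [mul_self_eq_one_iff_involutive, Function.Involutive, Fin.forall_fin_succ']

lemma decomposeLast_symm_castSucc_apply_castSucc {j : Fin n} {τ : Perm (Fin n)} (hj : τ j = j)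
    (k : Fin n) :
    decomposeLast.symm (j.castSucc, τ) k.castSucc
      = if k = j then Fin.last n else (τ k).castSucc := by
  rw [decomposeLast_symm_apply_castSucc_of_fixed
    (fun i hi => by rwa [← Fin.castSucc_injective _ hi])]
  simp

lemma mul_self_decomposeLast_symm_castSucc_iff (j : Fin n) (τ : Perm (Fin n)) :
    decomposeLast.symm (j.castSucc, τ) * decomposeLast.symm (j.castSucc, τ) = 1 ↔
      τ * τ = 1 ∧ τ j = j := by
  have hne {k : Fin n} (hj : τ j = j) (hk : k ≠ j) : τ k ≠ j := fun h =>
    hk (τ.injective (h.trans hj.symm))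
  simp only [mul_self_eq_one_iff_involutive, Function.Involutive, Fin.forall_fin_succ']
  refine ⟨fun h => ?_, fun ⟨hτ, hj⟩ => ?_⟩
  · have hj : τ j = j := by simpa [swap_apply_eq_iff] using h.2
    refine ⟨fun k => ?_, hj⟩
    by_cases hk : k = j
    · rw [hk, hj, hj]
    · simpa [decomposeLast_symm_castSucc_apply_castSucc hj, hk, hne hj hk] using h.1 k
  · refine ⟨fun k => ?_, by simp [decomposeLast_symm_castSucc_apply_castSucc hj]⟩
    by_cases hk : k = j
    · simp [decomposeLast_symm_castSucc_apply_castSucc hj, hk]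
    · simp [decomposeLast_symm_castSucc_apply_castSucc hj, hk, hne hj hk, hτ k]

end Equiv.Perm

section InversionsAndCycles

open Equiv.Perm

variable {n : ℕ}

lemma ell_eq_sum (σ : Equiv.Perm (Fin n)) :
    ell σ = ∑ a, ∑ b, if a < b ∧ σ b < σ a then 1 else 0 := by
  rw [ell, card_filter, Fintype.sum_prod_type]

lemma ell_decomposeLast_symm_last (τ : Equiv.Perm (Fin n)) :
    ell (decomposeLast.symm (Fin.last n, τ)) = ell τ := by
  simp only [ell_eq_sum, Fin.sum_univ_castSucc, decomposeLast_symm_last_apply_castSucc,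
    decomposeLast_symm_apply_last, Fin.castSucc_lt_castSucc_iff, (Fin.castSucc_lt_last _).not_gt,
    (Fin.le_last _).not_gt, and_false, false_and, if_false, add_zero, sum_const_zero]

lemma ell_decomposeLast_symm_castSucc {j : Fin n} {τ : Equiv.Perm (Fin n)} (hj : τ j = j) :
    ell (decomposeLast.symm (j.castSucc, τ)) = ell τ + 2 * #{a | j < a ∧ j < τ a} + 1 := by
  set σ := decomposeLast.symm (j.castSucc, τ)
  have hσ := decomposeLast_symm_castSucc_apply_castSucc hj
  have hne {k : Fin n} (hk : k ≠ j) : τ k ≠ j := fun h => hk (τ.injective (h.trans hj.symm))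
  have hsplit : ell σ
      = (∑ a : Fin n, ∑ b : Fin n, if a < b ∧ σ b.castSucc < σ a.castSucc then 1 else 0)
      + ∑ a : Fin n, if j.castSucc < σ a.castSucc then 1 else 0 := by
    simp only [ell_eq_sum, Fin.sum_univ_castSucc, Fin.castSucc_lt_castSucc_iff,
      (Fin.castSucc_lt_last _).not_gt, (Fin.lt_irrefl _), Fin.castSucc_lt_last, true_and,
      false_and, if_false, add_zero, sum_const_zero, sum_add_distrib, σ,
      decomposeLast_symm_apply_last]
  -- The inversion indicators of `σ` and `τ` differ only in row `j` and in column `j`.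
  have hpair (a b : Fin n) : (if a < b ∧ σ b.castSucc < σ a.castSucc then 1 else 0)
      + (if b = j then (if a < j ∧ j < τ a then 1 else 0) else 0)
      = (if a < b ∧ τ b < τ a then 1 else 0)
        + (if a = j then (if j < b ∧ j < τ b then 1 else 0) else 0) := by
    rw [hσ, hσ]
    by_cases ha : a = j <;> by_cases hb : b = j
    · simp [ha, hb]
    · have := hne hb
      subst ha
      simp only [hb, ite_true, ite_false, Fin.castSucc_lt_last, and_true, add_zero]
      grind
    · simp [ha, hb, hj, (Fin.castSucc_lt_last _).not_gt]
    · simp [ha, hb]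
  have hlast (a : Fin n) : (if j.castSucc < σ a.castSucc then 1 else 0)
      = (if a = j then 1 else 0) + (if a < j ∧ j < τ a then 1 else 0)
        + (if j < a ∧ j < τ a then 1 else 0) := by
    rw [hσ]
    by_cases ha : a = j
    · simp [ha, hj, Fin.castSucc_lt_last]
    · simp only [ha, ite_false, Fin.castSucc_lt_castSucc_iff, zero_add]
      grind
  have hsum := congrArg (fun F => ∑ a, ∑ b, F a b) (funext₂ hpair)
  simp only [sum_add_distrib, sum_ite_irrel, sum_const_zero, sum_ite_eq', mem_univ, if_true,
    ← ell_eq_sum] at hsum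
  have hlastSum := congrArg (fun F => ∑ a, F a) (funext hlast)
  simp only [sum_add_distrib, sum_ite_eq', mem_univ, if_true] at hlastSum
  rw [hsplit, hlastSum, card_filter]
  omega

lemma cyc_decomposeLast_symm_last (τ : Equiv.Perm (Fin n)) :
    cyc (decomposeLast.symm (Fin.last n, τ)) = cyc τ := by
  simp [cyc, Fin.card_filter_univ_castSucc]

lemma cyc_decomposeLast_symm_castSucc {j : Fin n} {τ : Equiv.Perm (Fin n)} (hj : τ j = j) :
    cyc (decomposeLast.symm (j.castSucc, τ)) = cyc τ + 1 := by
  have hset : univ.filter (fun a : Fin n =>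
        a.castSucc < decomposeLast.symm (j.castSucc, τ) a.castSucc)
      = insert j (univ.filter fun a => a < τ a) := by
    ext a
    by_cases ha : a = j <;>
      simp [decomposeLast_symm_castSucc_apply_castSucc hj, ha, Fin.castSucc_lt_last]
  rw [cyc, Fin.card_filter_univ_castSucc, hset, card_insert_of_notMem (by simp [hj])]
  simp [cyc, (Fin.castSucc_lt_last j).not_gt]

end InversionsAndCycles

section MarkedInvolutions

open Equiv.Perm

variable {n : ℕ}

def IsMarkedInvolution (σ : Equiv.Perm (Fin n)) (O : Finset (Fin n)) : Prop :=
  σ * σ = 1 ∧ ∀ i ∈ O, σ i = i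

def IsArcOpenAt (σ : Equiv.Perm (Fin n)) (O : Finset (Fin n)) (k t : Fin n) : Prop :=
  k ∈ O ∨ (k < σ k ∧ t ≤ σ k)

/- At an `L` or `U` step `i` this is the height after the step (marked points count as open
arcs); at the right end `i` of an arc `(σ i, i)` it is the rank of that arc among the arcs open
just before `i`. -/
noncomputable def stepWeight (σ : Equiv.Perm (Fin n)) (O : Finset (Fin n)) (i : Fin n) : ℕ :=
  if σ i < i then #{k | k < σ i ∧ IsArcOpenAt σ O k i}
  else #{k | k ≤ i ∧ IsArcOpenAt σ O k i}

noncomputable def markedWeight (σ : Equiv.Perm (Fin n)) (O : Finset (Fin n)) : ℕ :=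
  ∑ i, stepWeight σ O i

section DecomposeLast

variable {p : Fin (n + 1)} {τ : Equiv.Perm (Fin n)} {O : Finset (Fin (n + 1))}
  {O' : Finset (Fin n)}

lemma isArcOpenAt_decomposeLast_symm_castSucc (hp : ∀ j, p = j.castSucc → τ j = j)
    (hO : ∀ k, k ∈ O' ↔ k.castSucc ∈ O ∨ k.castSucc = p) (k t : Fin n) :
    IsArcOpenAt (decomposeLast.symm (p, τ)) O k.castSucc t.castSucc ↔ IsArcOpenAt τ O' k t := by
  rw [IsArcOpenAt, IsArcOpenAt, hO, decomposeLast_symm_apply_castSucc_of_fixed hp]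
  split_ifs with hk
  · simp [← hk, Fin.castSucc_lt_last, Fin.le_last]
  · simp [hk]

lemma stepWeight_decomposeLast_symm_castSucc (hp : ∀ j, p = j.castSucc → τ j = j)
    (hO : ∀ k, k ∈ O' ↔ k.castSucc ∈ O ∨ k.castSucc = p) (i : Fin n) :
    stepWeight (decomposeLast.symm (p, τ)) O i.castSucc = stepWeight τ O' i := by
  have hσ := decomposeLast_symm_apply_castSucc_of_fixed hp
  have hopen := isArcOpenAt_decomposeLast_symm_castSucc hp hO
  by_cases hi : i.castSucc = p
  · subst hi
    simp only [stepWeight, hσ, hp i rfl, if_true, (Fin.castSucc_lt_last _).not_gt, lt_irrefl,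
      if_false, Fin.card_filter_univ_castSucc, Fin.castSucc_le_castSucc_iff, hopen,
      (Fin.castSucc_lt_last _).not_ge, false_and, add_zero]
  · simp only [stepWeight, hσ, hi, if_false, Fin.castSucc_lt_castSucc_iff,
      Fin.card_filter_univ_castSucc, Fin.castSucc_le_castSucc_iff, hopen,
      (Fin.castSucc_lt_last _).not_ge, (Fin.castSucc_lt_last _).not_gt, false_and, add_zero]

lemma markedWeight_decomposeLast_symm_last (hO : ∀ k, k ∈ O' ↔ k.castSucc ∈ O) :
    markedWeight (decomposeLast.symm (Fin.last n, τ)) O = markedWeight τ O' + #O := by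
  have hp : ∀ j : Fin n, Fin.last n = j.castSucc → τ j = j :=
    fun j h => absurd h.symm (Fin.castSucc_lt_last j).ne
  have hO' : ∀ k, k ∈ O' ↔ k.castSucc ∈ O ∨ k.castSucc = Fin.last n := by
    simp [hO, (Fin.castSucc_lt_last _).ne]
  have hlast : stepWeight (decomposeLast.symm (Fin.last n, τ)) O (Fin.last n) = #O := by
    set σ := decomposeLast.symm (Fin.last n, τ)
    have hσ : σ (Fin.last n) = Fin.last n := decomposeLast_symm_apply_last _ _
    have hclosed (k : Fin (n + 1)) (hk : σ k = Fin.last n) : ¬ k < σ k := by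
      rw [σ.injective (hk.trans hσ.symm), hσ]
      exact lt_irrefl _
    rw [stepWeight, hσ, if_neg (lt_irrefl _)]
    congr 1
    ext k
    simpa [IsArcOpenAt, Fin.le_last] using fun hlt hk => absurd hlt (hclosed k hk)
  rw [markedWeight, Fin.sum_univ_castSucc, hlast, markedWeight]
  simp only [stepWeight_decomposeLast_symm_castSucc hp hO']

lemma markedWeight_decomposeLast_symm_castSucc {j : Fin n} (hj : τ j = j)
    (hO : ∀ k, k ∈ O' ↔ k.castSucc ∈ O ∨ k = j) :
    markedWeight (decomposeLast.symm (j.castSucc, τ)) O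
      = markedWeight τ O' + #{k ∈ O' | k < j} := by
  have hp : ∀ i : Fin n, j.castSucc = i.castSucc → τ i = i :=
    fun i h => Fin.castSucc_injective _ h ▸ hj
  have hO' : ∀ k, k ∈ O' ↔ k.castSucc ∈ O ∨ k.castSucc = j.castSucc := by
    simp [hO]
  have hlast : stepWeight (decomposeLast.symm (j.castSucc, τ)) O (Fin.last n)
      = #{k ∈ O' | k < j} := by
    rw [stepWeight, decomposeLast_symm_apply_last, if_pos (Fin.castSucc_lt_last j),
      Fin.card_filter_univ_castSucc, if_neg fun h => (Fin.castSucc_lt_last j).not_gt h.1,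
      add_zero]
    congr 1
    ext k
    by_cases hk : k < j
    · simp [IsArcOpenAt, hk, hk.ne, decomposeLast_symm_castSucc_apply_castSucc hj, hO]
    · simp [hk]
  rw [markedWeight, Fin.sum_univ_castSucc, hlast, markedWeight]
  simp only [stepWeight_decomposeLast_symm_castSucc hp hO']

end DecomposeLast

lemma markedWeight_insert_of_fixed {τ : Equiv.Perm (Fin n)} {O : Finset (Fin n)} {j : Fin n}
    (hj : τ j = j) (hjO : j ∉ O) :
    markedWeight τ (insert j O) = markedWeight τ O + #{i | j < i ∧ j < τ i} + 1 := by
  have hopen (k t : Fin n) :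
      IsArcOpenAt τ (insert j O) k t ↔ k = j ∨ IsArcOpenAt τ O k t := by
    simp [IsArcOpenAt, or_assoc]
  have hjclosed (t : Fin n) : ¬ IsArcOpenAt τ O j t := by simp [IsArcOpenAt, hjO, hj]
  have hlocal (i : Fin n) : stepWeight τ (insert j O) i
      = stepWeight τ O i + if (if τ i < i then j < τ i else j ≤ i) then 1 else 0 := by
    unfold stepWeight
    simp only [hopen]
    split_ifs <;>
      rw [Finset.card_filter_and_eq_or _ (fun k => IsArcOpenAt τ O k i) (hjclosed i)] <;>
      simp_all
  have hcount : #{i | if τ i < i then j < τ i else j ≤ i} = #{i | j < i ∧ j < τ i} + 1 := by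
    rw [← card_insert_of_notMem (s := {i | j < i ∧ j < τ i}) (a := j) (by simp)]
    congr 1
    ext i
    by_cases hij : i = j
    · simp [hij, hj]
    · have := Ne.lt_or_gt hij
      simp only [mem_filter, mem_univ, true_and, mem_insert, hij, false_or]
      split_ifs <;> grind
  rw [markedWeight, markedWeight, sum_congr rfl fun i _ => hlocal i, sum_add_distrib,
    ← card_filter, hcount, add_assoc]

lemma two_mul_markedWeight_empty {σ : Equiv.Perm (Fin n)} (hσ : σ * σ = 1) :
    2 * markedWeight σ ∅ = ell σ + cyc σ := by
  induction n with
  | zero => simp [markedWeight, ell, cyc]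
  | succ n ih =>
    obtain ⟨⟨p, τ⟩, rfl⟩ := decomposeLast.symm.surjective σ
    induction p using Fin.lastCases with
    | last =>
      rw [mul_self_decomposeLast_symm_last_iff] at hσ
      rw [markedWeight_decomposeLast_symm_last (O' := ∅) (by simp), ell_decomposeLast_symm_last,
        cyc_decomposeLast_symm_last, card_empty, add_zero, ih hσ]
    | cast j =>
      obtain ⟨hτ, hj⟩ := (mul_self_decomposeLast_symm_castSucc_iff j τ).1 hσ
      have hjτ := ih hτ
      rw [markedWeight_decomposeLast_symm_castSucc hj (O' := {j}) (by simp), ← insert_empty_eq,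
        markedWeight_insert_of_fixed hj (notMem_empty j), ell_decomposeLast_symm_castSucc hj,
        cyc_decomposeLast_symm_castSucc hj]
      simp only [insert_empty_eq, filter_singleton, lt_irrefl, if_false, card_empty]
      omega

lemma isMarkedInvolution_decomposeLast_symm_last {τ : Equiv.Perm (Fin n)}
    {O : Finset (Fin (n + 1))} {O' : Finset (Fin n)} (hO : ∀ k, k ∈ O' ↔ k.castSucc ∈ O) :
    IsMarkedInvolution (decomposeLast.symm (Fin.last n, τ)) O ↔ IsMarkedInvolution τ O' := by
  simp [IsMarkedInvolution, mul_self_decomposeLast_symm_last_iff, Fin.forall_fin_succ', hO]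

lemma isMarkedInvolution_decomposeLast_symm_castSucc {j : Fin n} {τ : Equiv.Perm (Fin n)}
    (O : Finset (Fin n)) :
    IsMarkedInvolution (decomposeLast.symm (j.castSucc, τ)) (O.image Fin.castSucc) ↔
      IsMarkedInvolution τ (insert j O) ∧ j ∉ O := by
  simp only [IsMarkedInvolution, mul_self_decomposeLast_symm_castSucc_iff, forall_mem_image,
    forall_mem_insert]
  constructor
  · rintro ⟨⟨hτ, hj⟩, hO⟩
    have hfix (k : Fin n) (hk : k ∈ O) : k ≠ j ∧ τ k = k := by
      have := hO hk
      rw [decomposeLast_symm_castSucc_apply_castSucc hj] at this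
      split_ifs at this with hkj
      · exact absurd this.symm (Fin.castSucc_lt_last k).ne
      · exact ⟨hkj, Fin.castSucc_injective _ this⟩
    exact ⟨⟨hτ, hj, fun k hk => (hfix k hk).2⟩, fun hj' => (hfix j hj').1 rfl⟩
  · rintro ⟨⟨hτ, hj, hO⟩, hjO⟩
    refine ⟨⟨hτ, hj⟩, fun k hk => ?_⟩
    have hkj : k ≠ j := fun h => hjO (h ▸ hk)
    rw [decomposeLast_symm_castSucc_apply_castSucc hj, if_neg hkj, hO k hk]

lemma not_isMarkedInvolution_decomposeLast_symm_castSucc_insert_last {j : Fin n}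
    {τ : Equiv.Perm (Fin n)} (O : Finset (Fin (n + 1))) :
    ¬ IsMarkedInvolution (decomposeLast.symm (j.castSucc, τ)) (insert (Fin.last n) O) := fun h =>
  (Fin.castSucc_lt_last j).ne (by simpa using h.2 _ (mem_insert_self _ _))

noncomputable def markedSum (n h : ℕ) : ℤ[X] :=
  ∑ σ : Equiv.Perm (Fin n), ∑ O with IsMarkedInvolution σ O ∧ #O = h, X ^ markedWeight σ O

lemma markedSum_zero_left (h : ℕ) : markedSum 0 h = if h = 0 then 1 else 0 := by
  rw [markedSum, Fintype.sum_unique, sum_filter, Fintype.sum_unique]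
  simp [IsMarkedInvolution, markedWeight, eq_comm, Subsingleton.elim (default : Finset (Fin 0)) ∅]

lemma sum_marked_decomposeLast_symm_last (τ : Equiv.Perm (Fin n)) (h : ℕ) :
    ∑ O with IsMarkedInvolution (decomposeLast.symm (Fin.last n, τ)) O ∧ #O = h,
        (X : ℤ[X]) ^ markedWeight (decomposeLast.symm (Fin.last n, τ)) O
      = X ^ h * ∑ O with IsMarkedInvolution τ O ∧ #O = h, X ^ markedWeight τ O
        + if h = 0 then 0 else
            X ^ h * ∑ O with IsMarkedInvolution τ O ∧ #O = h - 1, X ^ markedWeight τ O := by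
  have hcard (O : Finset (Fin n)) : #(O.image Fin.castSucc) = #O :=
    card_image_of_injective _ (Fin.castSucc_injective n)
  have hlast (O : Finset (Fin n)) : Fin.last n ∉ O.image Fin.castSucc := by
    simp [(Fin.castSucc_lt_last _).ne]
  rw [sum_filter, Fin.sum_finset_succ]
  congr 1
  · rw [mul_sum, sum_filter]
    refine sum_congr rfl fun O _ => ?_
    have hO (k : Fin n) : k ∈ O ↔ k.castSucc ∈ O.image Fin.castSucc := by simp
    rw [isMarkedInvolution_decomposeLast_symm_last hO, markedWeight_decomposeLast_symm_last hO,
      hcard]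
    split_ifs with hc
    · rw [hc.2, pow_add, mul_comm]
    · rfl
  · split_ifs with h0
    · refine sum_eq_zero fun O _ => if_neg fun hc => ?_
      rw [card_insert_of_notMem (hlast O), h0] at hc
      exact Nat.succ_ne_zero _ hc.2
    rw [mul_sum, sum_filter]
    refine sum_congr rfl fun O _ => ?_
    have hO (k : Fin n) :
        k ∈ O ↔ k.castSucc ∈ insert (Fin.last n) (O.image Fin.castSucc) := by
      simp [(Fin.castSucc_lt_last _).ne]
    rw [isMarkedInvolution_decomposeLast_symm_last hO, markedWeight_decomposeLast_symm_last hO,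
      card_insert_of_notMem (hlast O), hcard]
    have hh : #O + 1 = h ↔ #O = h - 1 := by omega
    simp only [hh]
    split_ifs with hc
    · rw [hc.2, Nat.sub_add_cancel (Nat.pos_of_ne_zero h0), pow_add, mul_comm]
    · rfl

lemma sum_marked_decomposeLast_symm_castSucc (j : Fin n) (τ : Equiv.Perm (Fin n)) (h : ℕ) :
    ∑ O with IsMarkedInvolution (decomposeLast.symm (j.castSucc, τ)) O ∧ #O = h,
        (X : ℤ[X]) ^ markedWeight (decomposeLast.symm (j.castSucc, τ)) O
      = ∑ O with j ∈ O, if IsMarkedInvolution τ O ∧ #O = h + 1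
          then X ^ (markedWeight τ O + #{k ∈ O | k < j}) else 0 := by
  rw [← sum_filter_notMem_insert, sum_filter, Fin.sum_finset_succ, sum_filter,
    add_eq_left.mpr (sum_eq_zero fun O _ => if_neg fun hc =>
      not_isMarkedInvolution_decomposeLast_symm_castSucc_insert_last _ hc.1)]
  refine sum_congr rfl fun O _ => ?_
  by_cases hjO : j ∈ O
  · simp [isMarkedInvolution_decomposeLast_symm_castSucc, hjO]
  have hO (k : Fin n) : k ∈ insert j O ↔ k.castSucc ∈ O.image Fin.castSucc ∨ k = j := by
    simp [or_comm]
  simp only [isMarkedInvolution_decomposeLast_symm_castSucc, hjO, not_false_eq_true, and_true,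
    if_true, card_image_of_injective _ (Fin.castSucc_injective n), card_insert_of_notMem hjO,
    Nat.add_right_cancel_iff]
  split_ifs with hc
  · rw [markedWeight_decomposeLast_symm_castSucc (hc.1.2 j (mem_insert_self j O)) hO]
  · rfl

lemma sum_marked_rank_eq_qint_mul (h : ℕ) :
    ∑ j : Fin n, ∑ τ : Equiv.Perm (Fin n), ∑ O with j ∈ O,
        (if IsMarkedInvolution τ O ∧ #O = h + 1
          then (X : ℤ[X]) ^ (markedWeight τ O + #{k ∈ O | k < j}) else 0)
      = qint (h + 1) * markedSum n (h + 1) := by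
  rw [sum_comm, markedSum, mul_sum]
  refine sum_congr rfl fun τ _ => ?_
  rw [sum_comm' (t' := univ) (s' := id) (by simp), mul_sum, sum_filter]
  refine sum_congr rfl fun O _ => ?_
  split_ifs with hc
  · simp only [id, pow_add, ← mul_sum, sum_X_pow_card_filter_lt, hc.2, mul_comm]
  · exact sum_const_zero

lemma markedSum_succ (n h : ℕ) :
    markedSum (n + 1) h = X ^ h * markedSum n h
      + (if h = 0 then 0 else X ^ h * markedSum n (h - 1))
      + qint (h + 1) * markedSum n (h + 1) := by
  rw [markedSum, ← decomposeLast.symm.sum_comp, Fintype.sum_prod_type, Fin.sum_univ_castSucc]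
  simp only [sum_marked_decomposeLast_symm_castSucc, sum_marked_decomposeLast_symm_last,
    sum_marked_rank_eq_qint_mul, sum_add_distrib, ← mul_sum]
  split_ifs with h0
  · simp only [sum_const_zero, markedSum]
    ring
  · simp only [markedSum, mul_sum]
    ring

lemma markedSum_zero_right (n : ℕ) :
    markedSum n 0
      = ∑ σ : Equiv.Perm (Fin n) with σ * σ = 1, (X : ℤ[X]) ^ ((ell σ + cyc σ) / 2) := by
  rw [markedSum, sum_filter]
  refine sum_congr rfl fun σ _ => ?_
  have hcond (O : Finset (Fin n)) :
      IsMarkedInvolution σ O ∧ O = ∅ ↔ ∅ = O ∧ σ * σ = 1 := by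
    constructor
    · rintro ⟨hσ, rfl⟩
      exact ⟨rfl, hσ.1⟩
    · rintro ⟨rfl, hσ⟩
      exact ⟨⟨hσ, by simp⟩, rfl⟩
  simp only [card_eq_zero, sum_filter, hcond, ite_and, sum_ite_eq, mem_univ, if_true]
  split_ifs with hσ
  · rw [← two_mul_markedWeight_empty hσ, Nat.mul_div_cancel_left _ two_pos]
  · rfl

end MarkedInvolutions

lemma motzkinPrefixSum_eq_markedSum (n h : ℕ) : motzkinPrefixSum n h = markedSum n h := by
  induction n generalizing h with
  | zero => rw [motzkinPrefixSum_zero_left, markedSum_zero_left]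
  | succ n ih => rw [motzkinPrefixSum_succ, markedSum_succ, ih, ih, ih]

/-- `Σ_{μ ∈ M_n} H[μ;q] = Σ_{σ ∈ I_n} q^{ℓ̂(σ)}` with `ℓ̂ = (ℓ + c)/2`. -/
theorem motzkin_sum_eq_involution_rank_gf (n : ℕ) :
    ∑ μ ∈ Finset.univ.filter (fun μ : Fin n → Step => IsMotzkin μ), Hq μ
    = ∑ σ ∈ Finset.univ.filter (fun σ : Equiv.Perm (Fin n) => σ * σ = 1),
        (X : Polynomial ℤ) ^ ((ell σ + cyc σ) / 2) := by
  calc ∑ μ ∈ Finset.univ.filter (fun μ : Fin n → Step => IsMotzkin μ), Hq μ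
      = motzkinPrefixSum n 0 := by
        simp only [motzkinPrefixSum, isMotzkin_iff_isMotzkinPrefix_zero]
    _ = markedSum n 0 := motzkinPrefixSum_eq_markedSum n 0
    _ = _ := markedSum_zero_right n
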